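/- Let Φ be the restriction of the exterior derivative d to MT_k^{(r,p,q)}. Then the image of Φ equals the direct sum over j = p,...,q-1 of the spaces H_{k-1}^{r+2j+1} of degree-(k-1) homogeneous polynomial solutions of the Hodge-de Rham system in degree r+2j+1. -/

import Mathlib

open MvPolynomial

/-- Mixed polynomial differential forms on ℝ^m: one polynomial coefficient for each
increasing multi-index (i.e. each subset of the coordinates). -/
abbrev MixedForm (m : ℕ) := Finset (Fin m) → MvPolynomial (Fin m) ℝ

/-- The sign `(-1)^{#{j ∈ B : j < i}}`. -/
noncomputable def fsgn {m : ℕ} (i : Fin m) (B : Finset (Fin m)) : ℝ :=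
  (-1 : ℝ) ^ (B.filter (fun j => j < i)).card

/-- The exterior derivative on polynomial forms. -/
noncomputable def extD (m : ℕ) : MixedForm m →ₗ[ℝ] MixedForm m :=
  LinearMap.pi fun B => ∑ i ∈ B, fsgn i B •
    ((pderiv i).toLinearMap ∘ₗ LinearMap.proj (B.erase i))

/-- The codifferential (formal adjoint of the exterior derivative) on polynomial forms. -/
noncomputable def coD (m : ℕ) : MixedForm m →ₗ[ℝ] MixedForm m :=
  LinearMap.pi fun B => ∑ i ∈ Bᶜ, fsgn i B •
    ((pderiv i).toLinearMap ∘ₗ LinearMap.proj (insert i B))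

/-- Forms all of whose coefficients are homogeneous polynomials of degree `k`. -/
noncomputable def Homog (m k : ℕ) : Submodule ℝ (MixedForm m) where
  carrier := {P | ∀ B, (P B).IsHomogeneous k}
  add_mem' := fun ha hb B => (ha B).add (hb B)
  zero_mem' := fun B => isHomogeneous_zero _ _ _
  smul_mem' := by
    intro c P h B
    have h2 : (c • P) B = (C c : MvPolynomial (Fin m) ℝ) * P B := by
      simp [smul_eq_C_mul]
    rw [h2]
    simpa using (isHomogeneous_C (Fin m) c).mul (h B)

/-- Forms supported in form-degrees belonging to the set `S`. -/
noncomputable def DegSupp (m : ℕ) (S : Set ℕ) : Submodule ℝ (MixedForm m) where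
  carrier := {P | ∀ B : Finset (Fin m), B.card ∉ S → P B = 0}
  add_mem' := by intro a b ha hb B hB; simp [ha B hB, hb B hB]
  zero_mem' := by intro B hB; rfl
  smul_mem' := by intro c a ha B hB; simp [ha B hB]

/-- Homogeneity-`k` polynomial solutions of the Hodge–de Rham system in form-degree `s`. -/
noncomputable def Hsp (m k s : ℕ) : Submodule ℝ (MixedForm m) :=
  Homog m k ⊓ DegSupp m {s} ⊓ LinearMap.ker (extD m) ⊓ LinearMap.ker (coD m)

/-- Homogeneity-`k` polynomial solutions of the generalized Moisil–Théodoresco system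
of type `(r,p,q)`. -/
noncomputable def MTsp (m k r p q : ℕ) : Submodule ℝ (MixedForm m) :=
  Homog m k ⊓ DegSupp m {t | ∃ j, p ≤ j ∧ j ≤ q ∧ t = r + 2 * j} ⊓
    LinearMap.ker (extD m + coD m)

/-- The Hodge Laplacian `Δ = d d* + d* d`. -/
noncomputable def hodgeLap (m : ℕ) : MixedForm m →ₗ[ℝ] MixedForm m :=
  extD m ∘ₗ coD m + coD m ∘ₗ extD m

/-- Harmonic `s`-forms with homogeneous polynomial coefficients of degree `k`. -/
noncomputable def KerDelta (m k s : ℕ) : Submodule ℝ (MixedForm m) :=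
  Homog m k ⊓ DegSupp m {s} ⊓ LinearMap.ker (hodgeLap m)

/-- Multiplication of all coefficients by `r^{2j} = (x_1^2 + ⋯ + x_m^2)^j`. -/
noncomputable def mulRpow (m j : ℕ) : MixedForm m →ₗ[ℝ] MixedForm m :=
  LinearMap.pi fun B =>
    (LinearMap.mulLeft ℝ ((∑ i, X i ^ 2 : MvPolynomial (Fin m) ℝ) ^ j)) ∘ₗ
      LinearMap.proj B

/-- The dimension `d(k,m,s)` of the space of homogeneity-`k` polynomial solutions of the
Hodge–de Rham system in degree `s`, with the conventions `d(k,m,s) = 0` for `k < 0` or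
`s ∉ [0,m]`, `d(0,m,0) = d(0,m,m) = 1` and `d(k,m,0) = d(k,m,m) = 0` for `k ≥ 1`. -/
noncomputable def dHR (m : ℕ) (k s : ℤ) : ℚ :=
  if k < 0 ∨ s < 0 ∨ (m : ℤ) < s then 0
  else if s = 0 ∨ s = m then (if k = 0 then 1 else 0)
  else ((m - 2).choose (s.toNat - 1) : ℚ) * ((k.toNat + m - 2).choose (m - 2) : ℚ) *
    ((2 * (k : ℚ) + m) * ((k : ℚ) + m - 1)) / (((k : ℚ) + s) * ((k : ℚ) + m - s))

/-- The dimension of the space of homogeneous polynomials of degree `k` on ℝ^m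
(zero for negative `k`). -/
noncomputable def pdim (m : ℕ) (k : ℤ) : ℚ :=
  if k < 0 then 0 else ((k.toNat + m - 1).choose (m - 1) : ℚ)

/-- The subspace of `s`-forms with homogeneous polynomial coefficients of degree `k`
lying in the kernel of the operator `T`. -/
noncomputable def Kof (m k s : ℕ) (T : MixedForm m →ₗ[ℝ] MixedForm m) :
    Submodule ℝ (MixedForm m) :=
  Homog m k ⊓ DegSupp m {s} ⊓ LinearMap.ker T
section Aux

open Finset

variable {m : ℕ}

/-! ### Sign lemmas -/

lemma fsgn_mul_self (i : Fin m) (B : Finset (Fin m)) : fsgn i B * fsgn i B = 1 := by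
  unfold fsgn
  rw [← pow_add]
  exact Even.neg_one_pow ⟨_, rfl⟩

lemma fsgn_insert (i j : Fin m) (B : Finset (Fin m)) (hi : i ∉ B) :
    fsgn j (insert i B) = (if i < j then (-1:ℝ) else 1) * fsgn j B := by
  unfold fsgn
  by_cases h : i < j
  · rw [if_pos h, Finset.filter_insert, if_pos h,
      Finset.card_insert_of_notMem (fun hc => hi (Finset.mem_of_mem_filter _ hc)), pow_succ]
    ring
  · rw [if_neg h, Finset.filter_insert, if_neg h, one_mul]

lemma fsgn_insert_self (i : Fin m) (B : Finset (Fin m)) :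
    fsgn i (insert i B) = fsgn i B := by
  unfold fsgn
  rw [Finset.filter_insert, if_neg (lt_irrefl i)]

lemma fsgn_erase (i j : Fin m) (B : Finset (Fin m)) (hi : i ∈ B) :
    fsgn j (B.erase i) = (if i < j then (-1:ℝ) else 1) * fsgn j B := by
  have h := fsgn_insert i j (B.erase i) (Finset.notMem_erase i B)
  rw [Finset.insert_erase hi] at h
  by_cases hc : i < j
  · rw [if_pos hc] at h ⊢; rw [h]; ring
  · rw [if_neg hc] at h ⊢; rw [h]; ring

lemma fsgn_erase_self (i : Fin m) (B : Finset (Fin m)) :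
    fsgn i (B.erase i) = fsgn i B := by
  unfold fsgn
  congr 1
  rw [Finset.filter_erase, Finset.erase_eq_of_notMem]
  simp

lemma sign_cancel_erase {i j : Fin m} {B : Finset (Fin m)} (hi : i ∈ B) (hj : j ∈ B)
    (hij : i ≠ j) :
    fsgn i B * fsgn j (B.erase i) + fsgn j B * fsgn i (B.erase j) = 0 := by
  rw [fsgn_erase i j B hi, fsgn_erase j i B hj]
  rcases lt_trichotomy i j with h | h | h
  · rw [if_pos h, if_neg (asymm h)]; ring
  · exact absurd h hij
  · rw [if_neg (asymm h), if_pos h]; ring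

lemma sign_cancel_insert {i j : Fin m} {B : Finset (Fin m)} (hi : i ∉ B) (hj : j ∉ B)
    (hij : i ≠ j) :
    fsgn i B * fsgn j (insert i B) + fsgn j B * fsgn i (insert j B) = 0 := by
  rw [fsgn_insert i j B hi, fsgn_insert j i B hj]
  rcases lt_trichotomy i j with h | h | h
  · rw [if_pos h, if_neg (asymm h)]; ring
  · exact absurd h hij
  · rw [if_neg (asymm h), if_pos h]; ring

lemma sign_cancel_mixed {i j : Fin m} {B : Finset (Fin m)} (hi : i ∈ B) (hj : j ∉ B) :
    fsgn i B * fsgn j (B.erase i) + fsgn j B * fsgn i (insert j B) = 0 := by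
  have hij : i ≠ j := fun h => hj (h ▸ hi)
  rw [fsgn_erase i j B hi, fsgn_insert j i B hj]
  rcases lt_trichotomy i j with h | h | h
  · rw [if_pos h, if_neg (asymm h)]; ring
  · exact absurd h hij
  · rw [if_neg (asymm h), if_pos h]; ring

end Aux
section Ops

open Finset MvPolynomial

variable {m : ℕ}

/-- Generic "lowering" operator (like the exterior derivative). -/
noncomputable def lowerOp (m : ℕ)
    (f : Fin m → MvPolynomial (Fin m) ℝ →ₗ[ℝ] MvPolynomial (Fin m) ℝ) :
    MixedForm m →ₗ[ℝ] MixedForm m :=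
  LinearMap.pi fun B => ∑ i ∈ B, fsgn i B • ((f i) ∘ₗ LinearMap.proj (B.erase i))

/-- Generic "raising" operator (like the codifferential). -/
noncomputable def raiseOp (m : ℕ)
    (f : Fin m → MvPolynomial (Fin m) ℝ →ₗ[ℝ] MvPolynomial (Fin m) ℝ) :
    MixedForm m →ₗ[ℝ] MixedForm m :=
  LinearMap.pi fun B => ∑ i ∈ Bᶜ, fsgn i B • ((f i) ∘ₗ LinearMap.proj (insert i B))

lemma lowerOp_apply (f : Fin m → MvPolynomial (Fin m) ℝ →ₗ[ℝ] MvPolynomial (Fin m) ℝ)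
    (P : MixedForm m) (B : Finset (Fin m)) :
    lowerOp m f P B = ∑ i ∈ B, fsgn i B • f i (P (B.erase i)) := by
  simp [lowerOp, LinearMap.pi_apply, LinearMap.sum_apply]

lemma raiseOp_apply (f : Fin m → MvPolynomial (Fin m) ℝ →ₗ[ℝ] MvPolynomial (Fin m) ℝ)
    (P : MixedForm m) (B : Finset (Fin m)) :
    raiseOp m f P B = ∑ i ∈ Bᶜ, fsgn i B • f i (P (insert i B)) := by
  simp [raiseOp, LinearMap.pi_apply, LinearMap.sum_apply]

lemma extD_eq (m : ℕ) : extD m = lowerOp m (fun i => (pderiv i).toLinearMap) := rfl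

lemma coD_eq (m : ℕ) : coD m = raiseOp m (fun i => (pderiv i).toLinearMap) := rfl

/-- Multiplication by the variable `X i`, as a linear map. -/
noncomputable def mulX (m : ℕ) (i : Fin m) :
    MvPolynomial (Fin m) ℝ →ₗ[ℝ] MvPolynomial (Fin m) ℝ :=
  LinearMap.mulLeft ℝ (X i)

lemma mulX_apply (i : Fin m) (p : MvPolynomial (Fin m) ℝ) : mulX m i p = X i * p := rfl

end Ops
section Anticomm

open Finset MvPolynomial

variable {m : ℕ}
variable {f g : Fin m → MvPolynomial (Fin m) ℝ →ₗ[ℝ] MvPolynomial (Fin m) ℝ}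

lemma lower_expand (f g : Fin m → MvPolynomial (Fin m) ℝ →ₗ[ℝ] MvPolynomial (Fin m) ℝ)
    (P : MixedForm m) (B : Finset (Fin m)) :
    lowerOp m f (lowerOp m g P) B =
      ∑ i ∈ B, ∑ j ∈ B.erase i,
        (fsgn i B * fsgn j (B.erase i)) • f i (g j (P ((B.erase i).erase j))) := by
  rw [lowerOp_apply]
  refine Finset.sum_congr rfl fun i hi => ?_
  rw [lowerOp_apply, map_sum, Finset.smul_sum]
  refine Finset.sum_congr rfl fun j hj => ?_
  rw [map_smul, smul_smul]

lemma lower_lower (hc : ∀ i j : Fin m, i ≠ j → ∀ p, f i (g j p) = g j (f i p))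
    (P : MixedForm m) (B : Finset (Fin m)) :
    lowerOp m f (lowerOp m g P) B + lowerOp m g (lowerOp m f P) B = 0 := by
  rw [lower_expand, lower_expand]
  have h2 : ∑ i ∈ B, ∑ j ∈ B.erase i,
        (fsgn i B * fsgn j (B.erase i)) • g i (f j (P ((B.erase i).erase j))) =
      ∑ i ∈ B, ∑ j ∈ B.erase i,
        (fsgn j B * fsgn i (B.erase j)) • g j (f i (P ((B.erase j).erase i))) := by
    refine Finset.sum_comm' fun x y => ?_
    constructor
    · rintro ⟨hx, hy⟩
      exact ⟨Finset.mem_erase.2 ⟨(Finset.ne_of_mem_erase hy).symm, hx⟩, Finset.mem_of_mem_erase hy⟩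
    · rintro ⟨hx, hy⟩
      exact ⟨Finset.mem_of_mem_erase hx, Finset.mem_erase.2 ⟨(Finset.ne_of_mem_erase hx).symm, hy⟩⟩
  rw [h2, ← Finset.sum_add_distrib]
  refine Finset.sum_eq_zero fun i hi => ?_
  rw [← Finset.sum_add_distrib]
  refine Finset.sum_eq_zero fun j hj => ?_
  have hji : j ≠ i := Finset.ne_of_mem_erase hj
  have hjB : j ∈ B := Finset.mem_of_mem_erase hj
  rw [Finset.erase_right_comm, ← hc i j (Ne.symm hji), ← add_smul,
    sign_cancel_erase hi hjB (Ne.symm hji), zero_smul]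

lemma raise_expand (f g : Fin m → MvPolynomial (Fin m) ℝ →ₗ[ℝ] MvPolynomial (Fin m) ℝ)
    (P : MixedForm m) (B : Finset (Fin m)) :
    raiseOp m f (raiseOp m g P) B =
      ∑ i ∈ Bᶜ, ∑ j ∈ Bᶜ.erase i,
        (fsgn i B * fsgn j (insert i B)) • f i (g j (P (insert j (insert i B)))) := by
  rw [raiseOp_apply]
  refine Finset.sum_congr rfl fun i hi => ?_
  rw [raiseOp_apply, map_sum, Finset.smul_sum, Finset.compl_insert]
  refine Finset.sum_congr rfl fun j hj => ?_
  rw [map_smul, smul_smul]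

lemma raise_raise (hc : ∀ i j : Fin m, i ≠ j → ∀ p, f i (g j p) = g j (f i p))
    (P : MixedForm m) (B : Finset (Fin m)) :
    raiseOp m f (raiseOp m g P) B + raiseOp m g (raiseOp m f P) B = 0 := by
  rw [raise_expand, raise_expand]
  have h2 : ∑ i ∈ Bᶜ, ∑ j ∈ Bᶜ.erase i,
        (fsgn i B * fsgn j (insert i B)) • g i (f j (P (insert j (insert i B)))) =
      ∑ i ∈ Bᶜ, ∑ j ∈ Bᶜ.erase i,
        (fsgn j B * fsgn i (insert j B)) • g j (f i (P (insert i (insert j B)))) := by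
    refine Finset.sum_comm' fun x y => ?_
    constructor
    · rintro ⟨hx, hy⟩
      exact ⟨Finset.mem_erase.2 ⟨(Finset.ne_of_mem_erase hy).symm, hx⟩, Finset.mem_of_mem_erase hy⟩
    · rintro ⟨hx, hy⟩
      exact ⟨Finset.mem_of_mem_erase hx, Finset.mem_erase.2 ⟨(Finset.ne_of_mem_erase hx).symm, hy⟩⟩
  rw [h2, ← Finset.sum_add_distrib]
  refine Finset.sum_eq_zero fun i hi => ?_
  rw [← Finset.sum_add_distrib]
  refine Finset.sum_eq_zero fun j hj => ?_
  have hji : j ≠ i := Finset.ne_of_mem_erase hj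
  have hiB : i ∉ B := Finset.mem_compl.1 hi
  have hjB : j ∉ B := Finset.mem_compl.1 (Finset.mem_of_mem_erase hj)
  rw [Finset.insert_comm j i B, ← hc i j (Ne.symm hji), ← add_smul,
    sign_cancel_insert hiB hjB (Ne.symm hji), zero_smul]

end Anticomm
section LowerRaise

open Finset MvPolynomial

variable {m : ℕ}
variable {f g : Fin m → MvPolynomial (Fin m) ℝ →ₗ[ℝ] MvPolynomial (Fin m) ℝ}

lemma lower_raise (hc : ∀ i j : Fin m, i ≠ j → ∀ p, f i (g j p) = g j (f i p))
    (P : MixedForm m) (B : Finset (Fin m)) :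
    lowerOp m f (raiseOp m g P) B + raiseOp m g (lowerOp m f P) B =
      (∑ i ∈ B, f i (g i (P B))) + ∑ i ∈ Bᶜ, g i (f i (P B)) := by
  have t1 : lowerOp m f (raiseOp m g P) B =
      (∑ i ∈ B, f i (g i (P B))) +
      ∑ i ∈ B, ∑ j ∈ Bᶜ,
        (fsgn i B * fsgn j (B.erase i)) • f i (g j (P (insert j (B.erase i)))) := by
    rw [lowerOp_apply, ← Finset.sum_add_distrib]
    refine Finset.sum_congr rfl fun i hi => ?_
    rw [raiseOp_apply, Finset.compl_erase,
      Finset.sum_insert (by simp [hi] : i ∉ Bᶜ), map_add, map_sum, smul_add, Finset.smul_sum]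
    congr 1
    · rw [map_smul, smul_smul, fsgn_erase_self, Finset.insert_erase hi, fsgn_mul_self, one_smul]
    · exact Finset.sum_congr rfl fun j hj => by rw [map_smul, smul_smul]
  have t2 : raiseOp m g (lowerOp m f P) B =
      (∑ i ∈ Bᶜ, g i (f i (P B))) +
      ∑ j ∈ Bᶜ, ∑ i ∈ B,
        (fsgn j B * fsgn i (insert j B)) • g j (f i (P ((insert j B).erase i))) := by
    rw [raiseOp_apply, ← Finset.sum_add_distrib]
    refine Finset.sum_congr rfl fun j hj => ?_
    have hjB : j ∉ B := Finset.mem_compl.1 hj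
    rw [lowerOp_apply, Finset.sum_insert hjB, map_add, map_sum, smul_add, Finset.smul_sum]
    congr 1
    · rw [map_smul, smul_smul, fsgn_insert_self, Finset.erase_insert hjB, fsgn_mul_self, one_smul]
    · exact Finset.sum_congr rfl fun i hi => by rw [map_smul, smul_smul]
  rw [t1, t2, Finset.sum_comm (s := Bᶜ) (t := B), add_add_add_comm]
  have h5 : (∑ i ∈ B, ∑ j ∈ Bᶜ,
        (fsgn i B * fsgn j (B.erase i)) • f i (g j (P (insert j (B.erase i))))) +
      ∑ i ∈ B, ∑ j ∈ Bᶜ,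
        (fsgn j B * fsgn i (insert j B)) • g j (f i (P ((insert j B).erase i))) = 0 := by
    rw [← Finset.sum_add_distrib]
    refine Finset.sum_eq_zero fun i hi => ?_
    rw [← Finset.sum_add_distrib]
    refine Finset.sum_eq_zero fun j hj => ?_
    have hjB : j ∉ B := Finset.mem_compl.1 hj
    have hij : i ≠ j := fun h => hjB (h ▸ hi)
    rw [Finset.erase_insert_of_ne hij.symm, ← hc i j hij, ← add_smul,
      sign_cancel_mixed hi hjB, zero_smul]
  rw [h5, add_zero]

end LowerRaise
section Poly

open MvPolynomial

variable {m : ℕ}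

lemma pderiv_comm' (i j : Fin m) (p : MvPolynomial (Fin m) ℝ) :
    pderiv i (pderiv j p) = pderiv j (pderiv i p) := by
  induction p using MvPolynomial.induction_on with
  | C a => simp
  | add p q hp hq => simp [hp, hq]
  | mul_X p s hp =>
      have hz : ∀ a b : Fin m, pderiv a (pderiv b (X s : MvPolynomial (Fin m) ℝ)) = 0 := by
        intro a b
        rcases eq_or_ne s b with h | h
        · subst h; simp
        · simp [pderiv_X_of_ne h]
      simp only [pderiv_mul, map_add, hp, hz]
      ring

lemma pderiv_mulX_comm {i j : Fin m} (hij : i ≠ j) (p : MvPolynomial (Fin m) ℝ) :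
    pderiv i (mulX m j p) = mulX m j (pderiv i p) := by
  simp [mulX_apply, pderiv_mul, pderiv_X_of_ne hij.symm]

lemma sum_eq_degree (d : Fin m →₀ ℕ) : ∑ i : Fin m, d i = Finsupp.degree d :=
  (Finset.sum_subset (Finset.subset_univ _)
    (fun i _ hi => Finsupp.notMem_support_iff.1 hi)).symm

lemma euler_monomial (i : Fin m) (d : Fin m →₀ ℕ) (c : ℝ) :
    X i * pderiv i (monomial d c) = (d i) • monomial d c := by
  rw [pderiv_monomial]
  by_cases h : d i = 0
  · simp [h]
  · have hle : Finsupp.single i 1 ≤ d := by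
      rw [Finsupp.single_le_iff]
      omega
    rw [X, monomial_mul, one_mul, add_tsub_cancel_of_le hle, ← map_nsmul (monomial d)]
    congr 1
    rw [nsmul_eq_mul, mul_comm]

lemma euler {k : ℕ} {p : MvPolynomial (Fin m) ℝ} (hp : p.IsHomogeneous k) :
    ∑ i : Fin m, X i * pderiv i p = k • p := by
  conv_lhs => rw [p.as_sum]
  simp_rw [map_sum, Finset.mul_sum]
  rw [Finset.sum_comm]
  have key : ∀ d ∈ p.support,
      ∑ i : Fin m, X i * pderiv i (monomial d (coeff d p)) = k • monomial d (coeff d p) := by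
    intro d hd
    simp_rw [euler_monomial]
    rw [← Finset.sum_smul, sum_eq_degree]
    congr 1
    have h1 := hp (MvPolynomial.mem_support_iff.1 hd)
    rw [Finsupp.degree_eq_weight_one]
    exact h1
  rw [Finset.sum_congr rfl key, ← Finset.smul_sum, ← p.as_sum]

lemma isHomogeneous_pderiv {k : ℕ} {p : MvPolynomial (Fin m) ℝ} (hp : p.IsHomogeneous k)
    (i : Fin m) : (pderiv i p).IsHomogeneous (k - 1) := by
  rw [← mem_homogeneousSubmodule]
  have hps : pderiv i p = ∑ d ∈ p.support, pderiv i (monomial d (coeff d p)) := by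
    conv_lhs => rw [p.as_sum]
    rw [map_sum]
  rw [hps]
  refine Submodule.sum_mem _ fun d hd => ?_
  rw [pderiv_monomial, mem_homogeneousSubmodule]
  by_cases h : d i = 0
  · rw [h]
    simp only [Nat.cast_zero, mul_zero, map_zero]
    exact isHomogeneous_zero _ _ _
  · apply isHomogeneous_monomial
    have hle : Finsupp.single i 1 ≤ d := by
      rw [Finsupp.single_le_iff]; omega
    have hdeg : Finsupp.degree d = k := by
      rw [Finsupp.degree_eq_weight_one]
      exact hp (MvPolynomial.mem_support_iff.1 hd)
    have hsplit : d - Finsupp.single i 1 + Finsupp.single i 1 = d := tsub_add_cancel_of_le hle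
    have hadd : Finsupp.degree (d - Finsupp.single i 1) + Finsupp.degree (Finsupp.single i (1:ℕ))
        = Finsupp.degree d := by
      simp only [Finsupp.degree_eq_weight_one]
      conv_rhs => rw [← hsplit]
      exact (map_add _ _ _).symm
    have hone : Finsupp.degree (Finsupp.single i (1:ℕ)) = 1 := by
      exact Finsupp.degree_single i 1
    rw [hdeg, hone] at hadd
    omega

lemma isHomogeneous_mulX {k : ℕ} {p : MvPolynomial (Fin m) ℝ} (hp : p.IsHomogeneous k)
    (i : Fin m) : (mulX m i p).IsHomogeneous (k + 1) := by
  rw [mulX_apply, add_comm]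
  exact (isHomogeneous_X ℝ i).mul hp

end Poly
section OpsCor

open MvPolynomial

variable {m : ℕ}

/-- Wedge with `∑ xᵢ dxᵢ`. -/
noncomputable def epsX (m : ℕ) : MixedForm m →ₗ[ℝ] MixedForm m := lowerOp m (mulX m)

/-- Contraction with the Euler vector field. -/
noncomputable def iotaX (m : ℕ) : MixedForm m →ₗ[ℝ] MixedForm m := raiseOp m (mulX m)

lemma hc_dd : ∀ i j : Fin m, i ≠ j → ∀ p : MvPolynomial (Fin m) ℝ,
    (pderiv i).toLinearMap (((pderiv j).toLinearMap : MvPolynomial (Fin m) ℝ →ₗ[ℝ] _) p)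
      = (pderiv j).toLinearMap ((pderiv i).toLinearMap p) :=
  fun i j _ p => pderiv_comm' i j p

lemma hc_dX : ∀ i j : Fin m, i ≠ j → ∀ p : MvPolynomial (Fin m) ℝ,
    (pderiv i).toLinearMap (mulX m j p) = mulX m j ((pderiv i).toLinearMap p) :=
  fun i j hij p => pderiv_mulX_comm hij p

lemma hc_XX : ∀ i j : Fin m, i ≠ j → ∀ p : MvPolynomial (Fin m) ℝ,
    mulX m i (mulX m j p) = mulX m j (mulX m i p) := fun i j _ p => by
  simp only [mulX_apply]; ring

lemma extD_extD (P : MixedForm m) : extD m (extD m P) = 0 := by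
  funext B
  have h := lower_lower hc_dd P B
  rw [← extD_eq] at h
  exact add_self_eq_zero.1 h

lemma coD_coD (P : MixedForm m) : coD m (coD m P) = 0 := by
  funext B
  have h := raise_raise hc_dd P B
  rw [← coD_eq] at h
  exact add_self_eq_zero.1 h

lemma extD_epsX (P : MixedForm m) (B : Finset (Fin m)) :
    extD m (epsX m P) B + epsX m (extD m P) B = 0 := by
  have h := lower_lower hc_dX P B
  rw [← extD_eq] at h
  exact h

lemma coD_iotaX (P : MixedForm m) (B : Finset (Fin m)) :
    coD m (iotaX m P) B + iotaX m (coD m P) B = 0 := by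
  have h := raise_raise hc_dX P B
  rw [← coD_eq] at h
  exact h

lemma extD_iotaX (P : MixedForm m) (B : Finset (Fin m)) :
    extD m (iotaX m P) B + iotaX m (extD m P) B =
      (∑ i ∈ B, pderiv i (X i * P B)) + ∑ i ∈ Bᶜ, X i * pderiv i (P B) := by
  have h := lower_raise hc_dX P B
  rw [← extD_eq] at h
  exact h

lemma epsX_coD (P : MixedForm m) (B : Finset (Fin m)) :
    epsX m (coD m P) B + coD m (epsX m P) B =
      (∑ i ∈ B, X i * pderiv i (P B)) + ∑ i ∈ Bᶜ, pderiv i (X i * P B) := by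
  have h := lower_raise (f := mulX m) (g := fun i => (pderiv i).toLinearMap)
    (fun i j hij p => (hc_dX j i hij.symm p).symm) P B
  rw [← coD_eq] at h
  exact h

lemma sum_pderiv_mulX {n : ℕ} {ρ : MvPolynomial (Fin m) ℝ} (hρ : ρ.IsHomogeneous n)
    (B : Finset (Fin m)) :
    (∑ i ∈ B, pderiv i (X i * ρ)) + ∑ i ∈ Bᶜ, X i * pderiv i ρ = (B.card + n) • ρ := by
  have h1 : ∀ i : Fin m, pderiv i (X i * ρ) = ρ + X i * pderiv i ρ := fun i => by
    rw [pderiv_mul, pderiv_X_self, one_mul]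
  simp_rw [h1]
  rw [Finset.sum_add_distrib, Finset.sum_const, add_assoc, Finset.sum_add_sum_compl,
    euler hρ, ← add_smul]

lemma sum_mulX_pderiv {n : ℕ} {ρ : MvPolynomial (Fin m) ℝ} (hρ : ρ.IsHomogeneous n)
    (B : Finset (Fin m)) :
    (∑ i ∈ B, X i * pderiv i ρ) + ∑ i ∈ Bᶜ, pderiv i (X i * ρ) = (Bᶜ.card + n) • ρ := by
  have h1 : ∀ i : Fin m, pderiv i (X i * ρ) = ρ + X i * pderiv i ρ := fun i => by
    rw [pderiv_mul, pderiv_X_self, one_mul]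
  simp_rw [h1]
  rw [Finset.sum_add_distrib, Finset.sum_const, add_left_comm, Finset.sum_add_sum_compl,
    euler hρ, ← add_smul]

end OpsCor

section Proj

open MvPolynomial

variable {m : ℕ}
variable {f : Fin m → MvPolynomial (Fin m) ℝ →ₗ[ℝ] MvPolynomial (Fin m) ℝ}

/-- Projection onto the component of form-degree `s`. -/
noncomputable def projDeg (m s : ℕ) : MixedForm m →ₗ[ℝ] MixedForm m :=
  LinearMap.pi fun B => if B.card = s then LinearMap.proj B else 0

lemma projDeg_apply (s : ℕ) (P : MixedForm m) (B : Finset (Fin m)) :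
    projDeg m s P B = if B.card = s then P B else 0 := by
  rw [projDeg, LinearMap.pi_apply]
  split <;> simp

lemma projDeg_lower (s : ℕ) (P : MixedForm m) :
    projDeg m (s + 1) (lowerOp m f P) = lowerOp m f (projDeg m s P) := by
  funext B
  rw [projDeg_apply, lowerOp_apply]
  by_cases h : B.card = s + 1
  · rw [if_pos h, lowerOp_apply]
    refine Finset.sum_congr rfl fun i hi => ?_
    rw [projDeg_apply, if_pos (by rw [Finset.card_erase_of_mem hi, h]; rfl)]
  · rw [if_neg h, lowerOp_apply]
    symm
    refine Finset.sum_eq_zero fun i hi => ?_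
    have hcard : (B.erase i).card ≠ s := by
      rw [Finset.card_erase_of_mem hi]
      have := Finset.card_pos.2 ⟨i, hi⟩
      omega
    rw [projDeg_apply, if_neg hcard, map_zero, smul_zero]

lemma projDeg_raise (s : ℕ) (P : MixedForm m) :
    projDeg m s (raiseOp m f P) = raiseOp m f (projDeg m (s + 1) P) := by
  funext B
  rw [projDeg_apply, raiseOp_apply]
  by_cases h : B.card = s
  · rw [if_pos h, raiseOp_apply]
    refine Finset.sum_congr rfl fun i hi => ?_
    rw [projDeg_apply,
      if_pos (by rw [Finset.card_insert_of_notMem (Finset.mem_compl.1 hi), h])]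
  · rw [if_neg h, raiseOp_apply]
    symm
    refine Finset.sum_eq_zero fun i hi => ?_
    have hcard : (insert i B).card ≠ s + 1 := by
      rw [Finset.card_insert_of_notMem (Finset.mem_compl.1 hi)]
      omega
    rw [projDeg_apply, if_neg hcard, map_zero, smul_zero]

lemma projDeg_mem_homog {k : ℕ} {P : MixedForm m} (hP : P ∈ Homog m k) (s : ℕ) :
    projDeg m s P ∈ Homog m k := by
  intro B
  rw [projDeg_apply]
  split
  · exact hP B
  · exact isHomogeneous_zero _ _ _

lemma projDeg_mem_degsupp (s : ℕ) (P : MixedForm m) : projDeg m s P ∈ DegSupp m {s} := by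
  intro B hB
  rw [projDeg_apply, if_neg (by simpa using hB)]

lemma projDeg_eq_zero {S : Set ℕ} {P : MixedForm m} (hP : P ∈ DegSupp m S) {s : ℕ}
    (hs : s ∉ S) : projDeg m s P = 0 := by
  funext B
  rw [projDeg_apply]
  split
  · next h => exact hP B (by rw [h]; exact hs)
  · rfl

lemma lowerOp_mem_homog {a b : ℕ}
    (hf : ∀ (i : Fin m) (p : MvPolynomial (Fin m) ℝ), p.IsHomogeneous a →
      (f i p).IsHomogeneous b)
    {P : MixedForm m} (hP : P ∈ Homog m a) : lowerOp m f P ∈ Homog m b := by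
  intro B
  rw [lowerOp_apply, ← mem_homogeneousSubmodule]
  exact Submodule.sum_mem _ fun i hi => Submodule.smul_mem _ _
    ((mem_homogeneousSubmodule _ _).2 (hf i _ (hP _)))

lemma raiseOp_mem_homog {a b : ℕ}
    (hf : ∀ (i : Fin m) (p : MvPolynomial (Fin m) ℝ), p.IsHomogeneous a →
      (f i p).IsHomogeneous b)
    {P : MixedForm m} (hP : P ∈ Homog m a) : raiseOp m f P ∈ Homog m b := by
  intro B
  rw [raiseOp_apply, ← mem_homogeneousSubmodule]
  exact Submodule.sum_mem _ fun i hi => Submodule.smul_mem _ _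
    ((mem_homogeneousSubmodule _ _).2 (hf i _ (hP _)))

lemma lowerOp_mem_degsupp {t : ℕ} {P : MixedForm m} (hP : P ∈ DegSupp m {t}) :
    lowerOp m f P ∈ DegSupp m {t + 1} := by
  intro B hB
  rw [lowerOp_apply]
  refine Finset.sum_eq_zero fun i hi => ?_
  have hc : (B.erase i).card ∉ ({t} : Set ℕ) := by
    rw [Finset.card_erase_of_mem hi]
    have := Finset.card_pos.2 ⟨i, hi⟩
    intro hmem
    apply hB
    simp only [Set.mem_singleton_iff] at hmem ⊢
    omega
  rw [hP _ hc, map_zero, smul_zero]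

lemma raiseOp_mem_degsupp {t : ℕ} {P : MixedForm m} (hP : P ∈ DegSupp m {t + 1}) :
    raiseOp m f P ∈ DegSupp m {t} := by
  intro B hB
  rw [raiseOp_apply]
  refine Finset.sum_eq_zero fun i hi => ?_
  have hc : (insert i B).card ∉ ({t + 1} : Set ℕ) := by
    rw [Finset.card_insert_of_notMem (Finset.mem_compl.1 hi)]
    intro hmem
    apply hB
    simp only [Set.mem_singleton_iff] at hmem ⊢
    omega
  rw [hP _ hc, map_zero, smul_zero]

lemma degSupp_mono {S T : Set ℕ} (h : S ⊆ T) : DegSupp m S ≤ DegSupp m T :=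
  fun _P hP B hB => hP B fun hc => hB (h hc)

end Proj
section MainLemmas

open MvPolynomial

variable {m : ℕ}

lemma mem_Hsp {k s : ℕ} {P : MixedForm m} :
    P ∈ Hsp m k s ↔
      P ∈ Homog m k ∧ P ∈ DegSupp m {s} ∧ extD m P = 0 ∧ coD m P = 0 := by
  simp only [Hsp, Submodule.mem_inf, LinearMap.mem_ker, and_assoc]

lemma mem_MTsp {k r p q : ℕ} {P : MixedForm m} :
    P ∈ MTsp m k r p q ↔
      P ∈ Homog m k ∧ P ∈ DegSupp m {t | ∃ j, p ≤ j ∧ j ≤ q ∧ t = r + 2 * j} ∧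
        extD m P + coD m P = 0 := by
  simp only [MTsp, Submodule.mem_inf, LinearMap.mem_ker, LinearMap.add_apply, and_assoc]

lemma Hsp_le_degsupp (k s : ℕ) : Hsp m k s ≤ DegSupp m {s} :=
  le_trans (le_trans inf_le_left inf_le_left) inf_le_right

lemma indep_part (m k r p q : ℕ) :
    iSupIndep (fun j : (Finset.Ico p q : Finset ℕ) =>
      Hsp m k (r + 2 * (j : ℕ) + 1)) := by
  intro j
  rw [Submodule.disjoint_def]
  intro x hx hx2
  have h1 : x ∈ DegSupp m {r + 2 * (j : ℕ) + 1} := Hsp_le_degsupp _ _ hx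
  have h2 : x ∈ DegSupp m {t | ∃ i : (Finset.Ico p q : Finset ℕ), i ≠ j ∧
      t = r + 2 * (i : ℕ) + 1} := by
    refine (iSup_le fun i => iSup_le fun hne => ?_ :
      (⨆ i, ⨆ (_ : i ≠ j), Hsp m k (r + 2 * ((i : (Finset.Ico p q : Finset ℕ)) : ℕ) + 1)) ≤ _) hx2
    exact le_trans (Hsp_le_degsupp _ _)
      (degSupp_mono (by intro t ht; exact ⟨i, hne, ht⟩))
  funext B
  by_cases hB : B.card = r + 2 * (j : ℕ) + 1
  · refine h2 B ?_
    rintro ⟨i, hne, hti⟩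
    rw [hB] at hti
    exact hne (Subtype.ext (by omega))
  · exact h1 B (by simpa using hB)

end MainLemmas
section Surj

open MvPolynomial

lemma surj_part {m k r p q : ℕ} (hm : r + 2 * q ≤ m) (hk : 1 ≤ k) {j : ℕ}
    (hpj : p ≤ j) (hjq : j < q) {H : MixedForm m}
    (hH : H ∈ Hsp m (k - 1) (r + 2 * j + 1)) :
    ∃ P ∈ MTsp m k r p q, extD m P = H := by
  obtain ⟨hhom, hsupp, hd, hδ⟩ := mem_Hsp.1 hH
  set s : ℕ := r + 2 * j + 1 with hs
  have hsm : s + 1 ≤ m := by omega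
  set a : ℝ := ((k - 1 + s : ℕ) : ℝ) with ha
  set b : ℝ := ((k - 1 + (m - s) : ℕ) : ℝ) with hb
  have ha0 : a ≠ 0 := by
    rw [ha]
    exact_mod_cast (by omega : (k - 1 + s : ℕ) ≠ 0)
  have hb0 : b ≠ 0 := by
    rw [hb]
    exact_mod_cast (by omega : (k - 1 + (m - s) : ℕ) ≠ 0)
  -- key identities
  have hiota : extD m (iotaX m H) = a • H := by
    funext B
    have h := extD_iotaX H B
    rw [hd, map_zero] at h
    rw [Pi.zero_apply, add_zero] at h
    rw [h, sum_pderiv_mulX (hhom B) B]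
    by_cases hB : B.card = s
    · rw [Pi.smul_apply, hB, ha, ← Nat.cast_smul_eq_nsmul ℝ]
      norm_cast
      rw [Nat.add_comm]
    · rw [hsupp B (by simpa using hB), smul_zero, Pi.smul_apply,
        hsupp B (by simpa using hB), smul_zero]
  have heps : coD m (epsX m H) = b • H := by
    funext B
    have h := epsX_coD H B
    rw [hδ, map_zero] at h
    rw [Pi.zero_apply, zero_add] at h
    rw [h, sum_mulX_pderiv (hhom B) B]
    by_cases hB : B.card = s
    · have hcompl : Bᶜ.card = m - s := by
        rw [Finset.card_compl, Fintype.card_fin, hB]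
      rw [Pi.smul_apply, hcompl, hb, ← Nat.cast_smul_eq_nsmul ℝ]
      norm_cast
      rw [Nat.add_comm]
    · rw [hsupp B (by simpa using hB), smul_zero, Pi.smul_apply,
        hsupp B (by simpa using hB), smul_zero]
  have hiota2 : coD m (iotaX m H) = 0 := by
    funext B
    have h := coD_iotaX H B
    rw [hδ, map_zero] at h
    rw [Pi.zero_apply, add_zero] at h
    rw [h]
    rfl
  have heps2 : extD m (epsX m H) = 0 := by
    funext B
    have h := extD_epsX H B
    rw [hd, map_zero] at h
    rw [Pi.zero_apply, add_zero] at h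
    rw [h]
    rfl
  refine ⟨a⁻¹ • iotaX m H - b⁻¹ • epsX m H, ?_, ?_⟩
  · rw [mem_MTsp]
    refine ⟨?_, ?_, ?_⟩
    · -- homogeneity
      have h1 : iotaX m H ∈ Homog m (k - 1 + 1) :=
        raiseOp_mem_homog (fun i ρ hρ => isHomogeneous_mulX hρ i) hhom
      have h2 : epsX m H ∈ Homog m (k - 1 + 1) :=
        lowerOp_mem_homog (fun i ρ hρ => isHomogeneous_mulX hρ i) hhom
      have hk1 : k - 1 + 1 = k := by omega
      rw [hk1] at h1 h2
      exact Submodule.sub_mem _ (Submodule.smul_mem _ _ h1) (Submodule.smul_mem _ _ h2)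
    · -- degree support
      have h1 : iotaX m H ∈ DegSupp m {r + 2 * j} :=
        raiseOp_mem_degsupp (t := r + 2 * j) hsupp
      have h2 : epsX m H ∈ DegSupp m {s + 1} :=
        lowerOp_mem_degsupp hsupp
      have h1' := degSupp_mono (m := m)
        (show ({r + 2 * j} : Set ℕ) ⊆ {t | ∃ i, p ≤ i ∧ i ≤ q ∧ t = r + 2 * i} from by
          rintro t rfl; exact ⟨j, hpj, le_of_lt hjq, rfl⟩) h1
      have h2' := degSupp_mono (m := m)
        (show ({s + 1} : Set ℕ) ⊆ {t | ∃ i, p ≤ i ∧ i ≤ q ∧ t = r + 2 * i} from by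
          rintro t rfl; exact ⟨j + 1, by omega, by omega, by omega⟩) h2
      exact Submodule.sub_mem _ (Submodule.smul_mem _ _ h1') (Submodule.smul_mem _ _ h2')
    · -- system
      rw [map_sub, map_sub, map_smul, map_smul, map_smul, map_smul,
        hiota, heps, hiota2, heps2, smul_zero, smul_zero, smul_smul, smul_smul,
        inv_mul_cancel₀ ha0, inv_mul_cancel₀ hb0, one_smul]
      abel
  · rw [map_sub, map_smul, map_smul, hiota, heps2, smul_zero, sub_zero, smul_smul,
      inv_mul_cancel₀ ha0, one_smul]

end Surj
section Fwd

open MvPolynomial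

lemma fwd_part {m k r p q : ℕ} (hpq : p ≤ q) {P : MixedForm m}
    (hP : P ∈ MTsp m k r p q) :
    extD m P ∈ ⨆ j ∈ Finset.Ico p q, Hsp m (k - 1) (r + 2 * j + 1) := by
  obtain ⟨hhom, hsupp, hsys⟩ := mem_MTsp.1 hP
  -- decomposition of P into its pure-degree components
  have hPdec : P = ∑ j ∈ Finset.Icc p q, projDeg m (r + 2 * j) P := by
    funext B
    rw [Finset.sum_apply]
    by_cases hB : B.card ∈ {t | ∃ i, p ≤ i ∧ i ≤ q ∧ t = r + 2 * i}
    · obtain ⟨j0, h1, h2, h3⟩ := hB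
      rw [Finset.sum_eq_single j0]
      · rw [projDeg_apply, if_pos h3]
      · intro b hb hbne
        rw [projDeg_apply, if_neg (by omega)]
      · intro hj0
        exact absurd (Finset.mem_Icc.2 ⟨h1, h2⟩) hj0
    · rw [hsupp B hB]
      symm
      refine Finset.sum_eq_zero fun b hb => ?_
      rw [projDeg_apply, if_neg (fun hc => hB ⟨b, (Finset.mem_Icc.1 hb).1,
        (Finset.mem_Icc.1 hb).2, hc⟩)]
  -- coD (extD P) = 0
  have hcde : coD m (extD m P) = 0 := by
    have h := congrArg (coD m) hsys
    rw [map_add, map_zero, coD_coD, add_zero] at h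
    exact h
  -- top component of extD P vanishes
  have htop : extD m (projDeg m (r + 2 * q) P) = 0 := by
    have h := congrArg (projDeg m (r + 2 * q + 1)) hsys
    rw [map_add, map_zero] at h
    have h1 : projDeg m (r + 2 * q + 1) (extD m P) = extD m (projDeg m (r + 2 * q) P) := by
      rw [extD_eq]
      exact projDeg_lower (r + 2 * q) P
    have h2 : projDeg m (r + 2 * q + 1) (coD m P) = 0 := by
      rw [coD_eq, projDeg_raise (r + 2 * q + 1) P,
        projDeg_eq_zero hsupp (by rintro ⟨i, hi1, hi2, hi3⟩; omega), map_zero]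
    rw [h1, h2, add_zero] at h
    exact h
  -- extD P as a sum over Ico
  have hsum : extD m P = ∑ j ∈ Finset.Ico p q, extD m (projDeg m (r + 2 * j) P) := by
    conv_lhs => rw [hPdec]
    rw [map_sum, ← Finset.Ico_insert_right hpq,
      Finset.sum_insert Finset.right_notMem_Ico, htop, zero_add]
  rw [hsum]
  refine Submodule.sum_mem _ fun j hj => ?_
  have hmem : extD m (projDeg m (r + 2 * j) P) ∈ Hsp m (k - 1) (r + 2 * j + 1) := by
    rw [mem_Hsp]
    refine ⟨?_, ?_, ?_, ?_⟩
    · rw [extD_eq]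
      exact lowerOp_mem_homog (fun i ρ hρ => isHomogeneous_pderiv hρ i)
        (projDeg_mem_homog hhom _)
    · rw [extD_eq]
      exact lowerOp_mem_degsupp (projDeg_mem_degsupp _ _)
    · exact extD_extD _
    · have h1 : extD m (projDeg m (r + 2 * j) P) = projDeg m (r + 2 * j + 1) (extD m P) := by
        rw [extD_eq]
        exact (projDeg_lower (r + 2 * j) P).symm
      rw [h1, coD_eq, ← projDeg_raise (r + 2 * j) (extD m P), ← coD_eq, hcde, map_zero]
  exact Submodule.mem_iSup_of_mem j (Submodule.mem_iSup_of_mem hj hmem)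

end Fwd
theorem im_Phi_eq (m k r p q : ℕ) (hpq : p ≤ q) (hm : r + 2 * q ≤ m) (hk : 1 ≤ k) :
    Submodule.map (extD m) (MTsp m k r p q) =
      (⨆ j ∈ Finset.Ico p q, Hsp m (k - 1) (r + 2 * j + 1)) ∧
    iSupIndep (fun j : (Finset.Ico p q : Finset ℕ) =>
      Hsp m (k - 1) (r + 2 * (j : ℕ) + 1)) := by
  constructor
  · apply le_antisymm
    · rintro x ⟨P, hP, rfl⟩
      exact fwd_part hpq hP
    · refine iSup₂_le fun j hj => ?_
      intro H hH
      rw [Finset.mem_Ico] at hj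
      obtain ⟨P, hP, hPd⟩ := surj_part hm hk hj.1 hj.2 hH
      exact ⟨P, hP, hPd⟩
  · exact indep_part m (k - 1) r p q
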